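/- Any finite product of iterated integrals is a linear combination of single iterated integrals with nonnegative integer coefficients: for words τ_1,…,τ_p with letters in {1,…,n} and continuously differentiable drivers X^{(1)},…,X^{(n)} : [0,T] → ℝ, there exists a finitely supported function c from words to nonnegative integers, depending only on τ_1,…,τ_p (not on the drivers), supported on words of length |τ_1|+⋯+|τ_p|, such that ∏_{i=1}^p J^{τ_i}_{0,T} = Σ_α c(α) · J^α_{0,T}. -/

import Mathlib

/-!
Iterated integrals multiply according to the shuffle product of words. For words `ax` and `by`
with last letters `x` and `y`, both `J^{ax} J^{by}` and `∑_{s ∈ ax ⧢ by} J^s` vanish at `0`, and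
by the product rule and the shuffle identity for the shorter pairs `(a, by)` and `(ax, b)` both
have derivative `J^a J^{by} (X^x)' + J^{ax} J^b (X^y)'`. Iterating over the factors writes the
product as a sum over a multiset of words, whose multiplicities are the coefficients.
-/

/-- Iterated integral defined by recursion on the reversed word:
`iterRev X (j :: τ) t = ∫_0^t iterRev X τ s · (X j)'(s) ds`, so that the word is
integrated with its last letter outermost. -/
noncomputable def iterRev {n : ℕ} (X : Fin n → ℝ → ℝ) : List (Fin n) → ℝ → ℝ
  | [] => fun _ => 1
  | j :: τ => fun t => ∫ s in (0:ℝ)..t, iterRev X τ s * deriv (X j) s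

/-- `J X τ t` is the iterated integral `J^τ_{0,t}` of the drivers `X` along the word `τ`:
`∫_{0<u₁<⋯<u_k<t} (X^{τ₁})'(u₁)⋯(X^{τ_k})'(u_k) du₁⋯du_k`, with `J X [] t = 1`. -/
noncomputable def J {n : ℕ} (X : Fin n → ℝ → ℝ) (τ : List (Fin n)) (t : ℝ) : ℝ :=
  iterRev X τ.reverse t

section Shuffle

variable {α : Type*}

def shuffle : List α → List α → Multiset (List α)
  | [], b => {b}
  | x :: a, [] => {x :: a}
  | x :: a, y :: b => (shuffle a (y :: b)).map (x :: ·) + (shuffle (x :: a) b).map (y :: ·)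
  termination_by a b => a.length + b.length

@[simp] lemma shuffle_nil_left (b : List α) : shuffle [] b = {b} := by
  simp [shuffle]

@[simp] lemma shuffle_nil_right (a : List α) : shuffle a [] = {a} := by
  cases a <;> simp [shuffle]

lemma shuffle_cons_cons (x y : α) (a b : List α) :
    shuffle (x :: a) (y :: b) =
      (shuffle a (y :: b)).map (x :: ·) + (shuffle (x :: a) b).map (y :: ·) := by
  rw [shuffle]

lemma length_of_mem_shuffle : ∀ {a b s : List α}, s ∈ shuffle a b → s.length = a.length + b.length
  | [], b, s, hs => by simp_all
  | x :: a, [], s, hs => by simp_all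
  | x :: a, y :: b, s, hs => by
      rw [shuffle_cons_cons, Multiset.mem_add] at hs
      rcases hs with hs | hs <;> obtain ⟨u, hu, rfl⟩ := Multiset.mem_map.1 hs
      · simp [length_of_mem_shuffle hu]; omega
      · simp [length_of_mem_shuffle hu]; omega
  termination_by a b => a.length + b.length

def multiShuffle : List (List α) → Multiset (List α)
  | [] => {[]}
  | w :: ws => (multiShuffle ws).bind (shuffle w)

lemma length_of_mem_multiShuffle :
    ∀ {ws : List (List α)} {s : List α}, s ∈ multiShuffle ws → s.length = (ws.map List.length).sum
  | [], s, hs => by simp_all [multiShuffle]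
  | w :: ws, s, hs => by
      obtain ⟨u, hu, hs⟩ := Multiset.mem_bind.1 hs
      rw [length_of_mem_shuffle hs, length_of_mem_multiShuffle hu, List.map_cons, List.sum_cons]

end Shuffle

lemma Multiset.toFinsupp_sum_natCast_mul {ι R : Type*} [DecidableEq ι] [Semiring R]
    (m : Multiset ι) (g : ι → R) :
    (Multiset.toFinsupp m).sum (fun i k => (k : R) * g i) = (m.map g).sum := by
  simp [Finsupp.sum, Finset.sum_multiset_map_count, nsmul_eq_mul]

theorem HasDerivAt.multiset_sum {ι 𝕜 F : Type*} [NontriviallyNormedField 𝕜] [NormedAddCommGroup F]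
    [NormedSpace 𝕜 F] {m : Multiset ι} {f : ι → 𝕜 → F} {f' : ι → F} {x : 𝕜}
    (h : ∀ i ∈ m, HasDerivAt (f i) (f' i) x) :
    HasDerivAt (fun y => (m.map (f · y)).sum) (m.map f').sum x := by
  induction m using Multiset.induction with
  | empty => simpa using hasDerivAt_const x (0 : F)
  | cons i m ih =>
      simp only [Multiset.map_cons, Multiset.sum_cons]
      exact (h i (m.mem_cons_self i)).add (ih fun j hj => h j (Multiset.mem_cons_of_mem hj))

theorem eq_of_hasDerivAt_eq {𝕜 G : Type*} [NontriviallyNormedField 𝕜] [IsRCLikeNormedField 𝕜]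
    [NormedAddCommGroup G] [NormedSpace 𝕜 G] {f g : 𝕜 → G} {f' : 𝕜 → G}
    (hf : ∀ y, HasDerivAt f (f' y) y) (hg : ∀ y, HasDerivAt g (f' y) y) (x : 𝕜)
    (hfg : f x = g x) : f = g :=
  eq_of_fderiv_eq (fun y => (hf y).differentiableAt) (fun y => (hg y).differentiableAt)
    (fun y => by rw [(hf y).hasFDerivAt.fderiv, (hg y).hasFDerivAt.fderiv]) x hfg

section IterRev

variable {n : ℕ} {X : Fin n → ℝ → ℝ}

@[simp] lemma iterRev_nil (t : ℝ) : iterRev X [] t = 1 := rfl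

@[simp] lemma iterRev_cons_zero (j : Fin n) (τ : List (Fin n)) : iterRev X (j :: τ) 0 = 0 := by
  simp [iterRev]

variable (hX : ∀ i, Continuous (deriv (X i)))
include hX

lemma continuous_iterRev : ∀ τ : List (Fin n), Continuous (iterRev X τ)
  | [] => continuous_const
  | j :: τ => intervalIntegral.continuous_primitive
      (fun _ _ => ((continuous_iterRev τ).mul (hX j)).intervalIntegrable _ _) 0

lemma hasDerivAt_iterRev_cons (j : Fin n) (τ : List (Fin n)) (t : ℝ) :
    HasDerivAt (iterRev X (j :: τ)) (iterRev X τ t * deriv (X j) t) t :=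
  ((continuous_iterRev hX τ).mul (hX j)).integral_hasStrictDerivAt 0 t |>.hasDerivAt

theorem iterRev_mul_iterRev :
    ∀ (a b : List (Fin n)) (t : ℝ),
      iterRev X a t * iterRev X b t = ((shuffle a b).map (iterRev X · t)).sum
  | [], b, t => by simp
  | x :: a, [], t => by simp
  | x :: a, y :: b, t => by
      have ih₁ := iterRev_mul_iterRev a (y :: b)
      have ih₂ := iterRev_mul_iterRev (x :: a) b
      have hprod (s : ℝ) :=
        (hasDerivAt_iterRev_cons hX x a s).mul (hasDerivAt_iterRev_cons hX y b s)
      have hshuffle (s : ℝ) :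
          HasDerivAt (fun s => ((shuffle (x :: a) (y :: b)).map (iterRev X · s)).sum)
            (iterRev X a s * deriv (X x) s * iterRev X (y :: b) s +
              iterRev X (x :: a) s * (iterRev X b s * deriv (X y) s)) s := by
        simp only [shuffle_cons_cons, Multiset.map_add, Multiset.sum_add, Multiset.map_map,
          Function.comp_def]
        refine ((HasDerivAt.multiset_sum fun u _ => hasDerivAt_iterRev_cons hX x u s).fun_add
          (HasDerivAt.multiset_sum fun u _ => hasDerivAt_iterRev_cons hX y u s)).congr_deriv ?_
        rw [Multiset.sum_map_mul_right, Multiset.sum_map_mul_right, ← ih₁, ← ih₂]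
        ring
      exact congrFun (eq_of_hasDerivAt_eq hprod hshuffle 0 (by simp [shuffle_cons_cons])) t
  termination_by a b => a.length + b.length

theorem prod_iterRev_eq_sum_multiShuffle (t : ℝ) :
    ∀ ws : List (List (Fin n)),
      (ws.map (iterRev X · t)).prod = ((multiShuffle ws).map (iterRev X · t)).sum
  | [] => by simp [multiShuffle]
  | w :: ws => by
      rw [List.map_cons, List.prod_cons, prod_iterRev_eq_sum_multiShuffle t ws,
        ← Multiset.sum_map_mul_left, multiShuffle, Multiset.map_bind, Multiset.sum_bind]
      simp only [iterRev_mul_iterRev hX]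

end IterRev

theorem prod_iterated_integrals_eq_linear_combination_general {n : ℕ} (T : ℝ)
    (p : ℕ) (τ : Fin p → List (Fin n)) :
    ∃ c : List (Fin n) →₀ ℕ,
      (∀ α ∈ c.support, α.length = ∑ i, (τ i).length) ∧
      ∀ X : Fin n → ℝ → ℝ, (∀ i, ContDiff ℝ 1 (X i)) →
        (∏ i, J X (τ i) T) = c.sum (fun α k => (k : ℝ) * J X α T) := by
  -- `J` integrates the last letter outermost, so the shuffles are taken of the reversed words.
  let ws := List.ofFn fun i => (τ i).reverse
  refine ⟨Multiset.toFinsupp ((multiShuffle ws).map List.reverse), fun α hα => ?_, fun X hX => ?_⟩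
  · rw [Multiset.toFinsupp_support, Multiset.mem_toFinset] at hα
    obtain ⟨s, hs, rfl⟩ := Multiset.mem_map.1 hα
    simp [length_of_mem_multiShuffle hs, ws, List.sum_ofFn]
  · have hX' : ∀ i, Continuous (deriv (X i)) := fun i => (hX i).continuous_deriv le_rfl
    rw [Multiset.toFinsupp_sum_natCast_mul, Multiset.map_map]
    simpa [J, ws, Function.comp_def, List.prod_ofFn] using
      prod_iterRev_eq_sum_multiShuffle hX' T ws

/-- Any finite product of iterated integrals is a linear combination of
single iterated integrals with nonnegative integer coefficients, the coefficients depending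
only on the words (not on the drivers) and supported on words of total length. -/
theorem prod_iterated_integrals_eq_linear_combination {n : ℕ} (hn : 1 ≤ n) (T : ℝ)
    (hT : 0 < T) (p : ℕ) (τ : Fin p → List (Fin n)) :
    ∃ c : List (Fin n) →₀ ℕ,
      (∀ α ∈ c.support, α.length = ∑ i, (τ i).length) ∧
      ∀ X : Fin n → ℝ → ℝ, (∀ i, ContDiff ℝ 1 (X i)) →
        (∏ i, J X (τ i) T) = c.sum (fun α k => (k : ℝ) * J X α T) :=
  prod_iterated_integrals_eq_linear_combination_general T p τ
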